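/- arXiv:2101.08989 — 5 statements merged into one kernel-verified Lean document; each statement's English description precedes it below -/
import Mathlib

section
/- Let α be a real algebraic number greater than 1 and of degree d ≥ 1, and let C(α) be defined as in the context. If α^n is not an integer for any positive integer n, then ‖α^n‖ ≥ 3^(−(d−1)) · C(α)^(−n) for every positive integer n; in general, the inequality ‖α^n‖ ≥ 3^(−(d−1)) · C(α)^(−n) holds for every positive integer n such that α^n is not an integer. -/
/-- The distance from a real number to the nearest integer:
`‖x‖ = min { |x - m| : m ∈ ℤ }`. -/
noncomputable def distToNearestInt (x : ℝ) : ℝ := |x - round x|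

/-- For a real algebraic number `α > 1` of degree `d` with minimal polynomial `f` over `ℤ`
(primitive, positive leading coefficient), having leading coefficient `a_d` and complex
roots `α₁, …, α_d`, this is `C(α) = a_d · α^(d-1) · ∏ (|α_i| / α)`, the product taken
over the roots `α_i` with `|α_i| > α` (an empty product equals `1`). -/
noncomputable def Calpha (α : ℝ) (f : Polynomial ℤ) : ℝ :=
  (f.leadingCoeff : ℝ) * α ^ (f.natDegree - 1) *
    (((f.map (Int.castRingHom ℂ)).roots.filter (fun z => α < ‖z‖)).map
      (fun z => ‖z‖ / α)).prod

/-!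
Put `m = round (α ^ n)`. The resultant of `f` and `X ^ n - m` is the integer
`a_d ^ n * ∏ᵢ (αᵢ ^ n - m)`. It is nonzero: `f` is a scalar multiple of the minimal polynomial
of `α`, hence irreducible over `ℚ`, and it does not divide `X ^ n - m` because `α ^ n ≠ m`.
So its absolute value is at least `1`. The factor at `αᵢ = α` is `‖α ^ n‖`, and every other
factor is at most `3 * max (|αᵢ|, α) ^ n`; since `a_d * ∏_{αᵢ ≠ α} max (|αᵢ|, α) = C(α)`,
this gives `1 ≤ ‖α ^ n‖ * 3 ^ (d - 1) * C(α) ^ n`. The constant `3` comes from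
`|αᵢ ^ n - m| ≤ |αᵢ| ^ n + α ^ n + 1 / 2`.
-/

open Polynomial

namespace Polynomial

theorem map_resultant_eq_leadingCoeff_pow_mul_prod_eval {R K : Type*} [CommRing R] [Field K]
    {φ : R →+* K} (hφ : Function.Injective φ) (f g : R[X]) (hf : (f.map φ).Splits) :
    φ (resultant f g) =
      φ f.leadingCoeff ^ g.natDegree * ((f.map φ).roots.map fun r => (g.map φ).eval r).prod := by
  rw [← resultant_map_map, ← natDegree_map_eq_of_injective hφ f,
    resultant_eq_prod_eval _ _ _ natDegree_map_le hf, leadingCoeff_map_of_injective hφ]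

theorem one_le_abs_leadingCoeff_pow_mul_prod_norm_eval {f g : ℤ[X]} (h : resultant f g ≠ 0) :
    1 ≤ |(f.leadingCoeff : ℝ)| ^ g.natDegree *
      ((f.map (Int.castRingHom ℂ)).roots.map
        fun r => ‖(g.map (Int.castRingHom ℂ)).eval r‖).prod := by
  have hres := map_resultant_eq_leadingCoeff_pow_mul_prod_eval (φ := Int.castRingHom ℂ)
    Int.cast_injective f g (IsAlgClosed.splits _)
  have := congrArg (normHom (α := ℂ)) hres
  simp only [map_mul, map_pow, map_multiset_prod, Multiset.map_map, Function.comp_def,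
    normHom_apply, eq_intCast, Complex.norm_intCast] at this
  rw [← this]
  exact_mod_cast Int.one_le_abs h

theorem one_le_abs_leadingCoeff_pow_mul_prod_norm_pow_sub {f : ℤ[X]} {n : ℕ} {m : ℤ}
    (h : resultant f (X ^ n - C m) ≠ 0) :
    1 ≤ |(f.leadingCoeff : ℝ)| ^ n *
      ((f.map (Int.castRingHom ℂ)).roots.map fun r => ‖r ^ n - (m : ℂ)‖).prod := by
  simpa only [natDegree_X_pow_sub_C, Polynomial.map_sub, Polynomial.map_pow, map_X, map_C,
    eval_sub, eval_pow, eval_X, eval_C, Int.coe_castRingHom]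
    using one_le_abs_leadingCoeff_pow_mul_prod_norm_eval h

theorem resultant_ne_zero_of_natDegree_eq_minpoly {L : Type*} [Field L] [Algebra ℚ L] {x : L}
    {f g : ℤ[X]} (hf : f ≠ 0) (hfx : aeval x f = 0)
    (hdeg : f.natDegree = (minpoly ℚ x).natDegree) (hgx : aeval x g ≠ 0) :
    resultant f g ≠ 0 := by
  have hinj : Function.Injective (Int.castRingHom ℚ) := Int.cast_injective
  have aeval_map : ∀ p : ℤ[X], aeval x (p.map (Int.castRingHom ℚ)) = aeval x p := fun p => by
    rw [← algebraMap_int_eq, aeval_map_algebraMap]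
  set fℚ := f.map (Int.castRingHom ℚ)
  have hfℚ : fℚ ≠ 0 := (Polynomial.map_ne_zero_iff hinj).mpr hf
  have hfℚx : aeval x fℚ = 0 := by rw [aeval_map, hfx]
  have hirr : Irreducible fℚ :=
    (associated_of_dvd_of_natDegree_le (minpoly.dvd ℚ x hfℚx) hfℚ
      (by rw [natDegree_map_eq_of_injective hinj, hdeg])).irreducible
      (minpoly.irreducible (IsAlgebraic.isIntegral ⟨fℚ, hfℚ, hfℚx⟩))
  have hcop : IsCoprime fℚ (g.map (Int.castRingHom ℚ)) := by
    refine hirr.coprime_iff_not_dvd.mpr fun hdvd => hgx ?_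
    rw [← aeval_map]
    exact (hirr.dvd_iff_aeval_eq_zero hfℚx).mpr hdvd
  intro h
  have := congrArg (Int.castRingHom ℚ) h
  rw [map_zero, ← resultant_map_map, ← natDegree_map_eq_of_injective hinj f,
    ← natDegree_map_eq_of_injective hinj g] at this
  exact (resultant_eq_zero_iff.mp this).2 hcop

theorem natDegree_eq_card_roots_map_complex (f : ℤ[X]) :
    f.natDegree = Multiset.card (f.map (Int.castRingHom ℂ)).roots := by
  rw [← natDegree_map_eq_of_injective (Int.castRingHom ℂ).injective_int f,
    (IsAlgClosed.splits _).natDegree_eq_card_roots]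

theorem exists_roots_map_complex_eq_cons {f : ℤ[X]} (hf : f ≠ 0) {α : ℝ}
    (hα : aeval α f = 0) :
    ∃ s, (f.map (Int.castRingHom ℂ)).roots = (α : ℂ) ::ₘ s := by
  refine ⟨_, (Multiset.cons_erase ?_).symm⟩
  rw [mem_roots_map_of_injective (Int.castRingHom ℂ).injective_int hf, ← algebraMap_int_eq,
    ← aeval_def, ← Complex.coe_algebraMap, aeval_algebraMap_apply, hα, map_zero]

end Polynomial

theorem Multiset.prod_map_max_eq_pow_card_mul_prod_filter {β : Type*} (s : Multiset β)
    (g : β → ℝ) {a : ℝ} (ha : a ≠ 0) :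
    (s.map fun x => max (g x) a).prod =
      a ^ Multiset.card s * ((s.filter fun x => a < g x).map fun x => g x / a).prod := by
  induction s using Multiset.induction_on with
  | empty => simp
  | cons b t ih =>
    by_cases hb : a < g b
    · rw [Multiset.filter_cons_of_pos (p := fun x => a < g x) _ hb, Multiset.map_cons,
        Multiset.prod_cons, ih, max_eq_left hb.le, Multiset.map_cons, Multiset.prod_cons,
        Multiset.card_cons]
      field_simp
      ring
    · rw [Multiset.filter_cons_of_neg (p := fun x => a < g x) _ hb, Multiset.map_cons,
        Multiset.prod_cons, ih, max_eq_right (not_lt.mp hb), Multiset.card_cons]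
      ring

theorem abs_intCast_round_le (x : ℝ) : |(round x : ℝ)| ≤ |x| + 1 / 2 := by
  have := abs_sub_abs_le_abs_sub (round x : ℝ) x
  rw [abs_sub_comm] at this
  linarith [abs_sub_round x]

theorem norm_pow_sub_le_three_mul_max_pow (z w : ℂ) {a : ℝ} (ha : 1 ≤ a) (n : ℕ)
    (hw : ‖w‖ ≤ a ^ n + 1 / 2) : ‖z ^ n - w‖ ≤ 3 * max ‖z‖ a ^ n := by
  have hz : ‖z‖ ^ n ≤ max ‖z‖ a ^ n :=
    pow_le_pow_left₀ (norm_nonneg _) (le_max_left _ _) n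
  have ha' : a ^ n ≤ max ‖z‖ a ^ n := pow_le_pow_left₀ (by linarith) (le_max_right _ _) n
  have h1 : 1 ≤ max ‖z‖ a ^ n := one_le_pow₀ (ha.trans (le_max_right _ _))
  calc ‖z ^ n - w‖ ≤ ‖z‖ ^ n + ‖w‖ := by rw [← norm_pow]; exact norm_sub_le _ _
    _ ≤ 3 * max ‖z‖ a ^ n := by linarith

theorem prod_norm_pow_sub_le (s : Multiset ℂ) (w : ℂ) {a : ℝ} (ha : 1 ≤ a) (n : ℕ)
    (hw : ‖w‖ ≤ a ^ n + 1 / 2) :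
    (s.map fun r => ‖r ^ n - w‖).prod ≤
      3 ^ Multiset.card s * (s.map fun r => max ‖r‖ a).prod ^ n := by
  calc (s.map fun r => ‖r ^ n - w‖).prod ≤ (s.map fun r => 3 * max ‖r‖ a ^ n).prod :=
        Multiset.prod_map_le_prod_map₀ _ _ (fun _ _ => norm_nonneg _)
          fun r _ => norm_pow_sub_le_three_mul_max_pow r w ha n hw
    _ = 3 ^ Multiset.card s * (s.map fun r => max ‖r‖ a).prod ^ n := by
      rw [Multiset.prod_map_mul, Multiset.map_const', Multiset.prod_replicate,
        Multiset.prod_map_pow]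

theorem norm_sub_round_eq_distToNearestInt (x : ℝ) :
    ‖(x : ℂ) - (round x : ℤ)‖ = distToNearestInt x := by
  rw [distToNearestInt, ← Real.norm_eq_abs, ← Complex.norm_real]
  push_cast
  rfl

theorem Calpha_eq_leadingCoeff_mul_prod_max {α : ℝ} (hα : 0 < α) {f : ℤ[X]}
    {s : Multiset ℂ}
    (hroots : (f.map (Int.castRingHom ℂ)).roots = (α : ℂ) ::ₘ s) :
    Calpha α f = f.leadingCoeff * (s.map fun r => max ‖r‖ α).prod := by
  have hdeg : f.natDegree = Multiset.card s + 1 := by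
    rw [natDegree_eq_card_roots_map_complex, hroots, Multiset.card_cons]
  have hfilter :
      ((α : ℂ) ::ₘ s).filter (fun z => α < ‖z‖) = s.filter (fun z => α < ‖z‖) :=
    Multiset.filter_cons_of_neg _ (by simp [abs_of_pos hα])
  rw [Calpha, hroots, hfilter, hdeg, Nat.add_sub_cancel, mul_assoc,
    Multiset.prod_map_max_eq_pow_card_mul_prod_filter _ _ hα.ne']

theorem liouville_lower_bound_fractional_parts_general (α : ℝ) (hα1 : 1 < α)
    (d : ℕ)
    (f : Polynomial ℤ) (hflead : 0 < f.leadingCoeff)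
    (hfroot : Polynomial.aeval α f = 0)
    (hfdeg : f.natDegree = d) (hmin : d = (minpoly ℚ α).natDegree) :
    ∀ n : ℕ, 0 < n → (¬ ∃ k : ℤ, α ^ n = (k : ℝ)) →
      distToNearestInt (α ^ n) ≥ (3 : ℝ) ^ (-((d : ℤ) - 1)) * (Calpha α f) ^ (-(n : ℤ)) := by
  intro n _ hnotint
  have hα0 : 0 < α := one_pos.trans hα1
  have hf0 : f ≠ 0 := by rintro rfl; simp at hflead
  have hlead : (0 : ℝ) < f.leadingCoeff := Int.cast_pos.mpr hflead
  obtain ⟨s, hroots⟩ := exists_roots_map_complex_eq_cons hf0 hfroot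
  have hd : (d : ℤ) - 1 = Multiset.card s := by
    rw [← hfdeg, natDegree_eq_card_roots_map_complex, hroots, Multiset.card_cons]
    omega
  have hres : resultant f (X ^ n - C (round (α ^ n))) ≠ 0 :=
    resultant_ne_zero_of_natDegree_eq_minpoly hf0 hfroot (hfdeg.trans hmin)
      (by simpa [sub_eq_zero] using fun h => hnotint ⟨_, h⟩)
  have hlower := one_le_abs_leadingCoeff_pow_mul_prod_norm_pow_sub hres
  rw [hroots, Multiset.map_cons, Multiset.prod_cons, ← Complex.ofReal_pow,
    norm_sub_round_eq_distToNearestInt, abs_of_pos hlead] at hlower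
  have hupper := prod_norm_pow_sub_le s (round (α ^ n) : ℂ) hα1.le n (by
    simpa [Complex.norm_intCast, abs_of_pos (pow_pos hα0 n)] using abs_intCast_round_le (α ^ n))
  have key : 1 ≤ distToNearestInt (α ^ n) * (3 ^ Multiset.card s * Calpha α f ^ n) := by
    rw [Calpha_eq_leadingCoeff_mul_prod_max hα0 hroots]
    calc (1 : ℝ) ≤ _ := hlower
      _ ≤ (f.leadingCoeff : ℝ) ^ n * (distToNearestInt (α ^ n) *
          (3 ^ Multiset.card s * (s.map fun r => max ‖r‖ α).prod ^ n)) := by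
        gcongr
        exact abs_nonneg _
      _ = _ := by ring
  rw [hd, zpow_neg, zpow_neg, zpow_natCast, zpow_natCast, ← mul_inv, ge_iff_le,
    inv_le_iff_one_le_mul₀ (pos_of_mul_pos_right (one_pos.trans_le key) (abs_nonneg _))]
  exact key

/-- Liouville-type bound: for a real algebraic number `α > 1` of degree `d ≥ 1`, one has
`‖α^n‖ ≥ 3^(-(d-1)) · C(α)^(-n)` for every positive integer `n` such that `α^n` is
not an integer. -/
theorem liouville_lower_bound_fractional_parts (α : ℝ) (hα1 : 1 < α)
    (d : ℕ) (hd : 1 ≤ d)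
    (f : Polynomial ℤ) (hfprim : f.IsPrimitive) (hflead : 0 < f.leadingCoeff)
    (hfroot : Polynomial.aeval α f = 0)
    (hfdeg : f.natDegree = d) (hmin : d = (minpoly ℚ α).natDegree) :
    ∀ n : ℕ, 0 < n → (¬ ∃ k : ℤ, α ^ n = (k : ℝ)) →
      distToNearestInt (α ^ n) ≥ (3 : ℝ) ^ (-((d : ℤ) - 1)) * (Calpha α f) ^ (-(n : ℤ)) :=
  liouville_lower_bound_fractional_parts_general α hα1 d f hflead hfroot hfdeg hmin
end

section
/- Let a ≥ 1 be an integer and b ∈ {−1, 1} with a² − 4b > 0, and set α = (a + √(a² − 4b))/2. If α > 1, then for every positive integer n with α^n ≥ 2 one has ‖α^n‖ = α^(−n). -/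
theorem distToNearestInt_eq_abs_sub_of_abs_sub_lt {x : ℝ} {m : ℤ} (h : |x - m| < 1 / 2) :
    distToNearestInt x = |x - m| := by
  have hround : round x = m := by
    rw [round_eq_iff]
    obtain ⟨hlo, hhi⟩ := abs_lt.mp h
    constructor <;> linarith
  rw [distToNearestInt, hround]

theorem distToNearestInt_eq_inv_of_add_eq_intCast {t s : ℝ} {m : ℤ} (hsum : t + s = m)
    (hunit : |t * s| = 1) (ht : 2 ≤ t) : distToNearestInt t = t⁻¹ := by
  have hs : |s| = t⁻¹ := by
    rw [abs_mul, abs_of_pos (by linarith)] at hunit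
    exact eq_inv_of_mul_eq_one_right hunit
  have hs_ne : |s| ≠ 1 / 2 := by
    intro hhalf
    have ht2 : t = 2 := by
      rw [hs, one_div] at hhalf
      exact inv_injective hhalf
    have hs_int : s = ((m - 2 : ℤ) : ℝ) := by push_cast; linarith
    rw [hs_int, ← Int.cast_abs] at hhalf
    rcases (abs_nonneg (m - 2)).eq_or_lt' with h0 | hpos
    · rw [h0] at hhalf; norm_num at hhalf
    · have : (1 : ℝ) ≤ |m - 2| := by exact_mod_cast hpos
      linarith
  have hs_lt : |s| < 1 / 2 :=
    lt_of_le_of_ne (hs ▸ inv_le_of_inv_le₀ (by norm_num) (by linarith)) hs_ne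
  have hts : t - m = -s := by linarith
  rw [distToNearestInt_eq_abs_sub_of_abs_sub_lt (by rwa [hts, abs_neg]), hts, abs_neg, hs]

theorem exists_intCast_eq_pow_add_pow {R : Type*} [CommRing R] {x y : R} {a b : ℤ}
    (hsum : x + y = a) (hprod : x * y = b) (k : ℕ) : ∃ m : ℤ, x ^ k + y ^ k = m := by
  induction k using Nat.twoStepInduction with
  | zero => exact ⟨2, by norm_num⟩
  | one => exact ⟨a, by simpa using hsum⟩
  | more k ih₀ ih₁ =>
    obtain ⟨m₀, h₀⟩ := ih₀
    obtain ⟨m₁, h₁⟩ := ih₁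
    refine ⟨a * m₁ - b * m₀, ?_⟩
    have hrec : x ^ (k + 2) + y ^ (k + 2) =
        (x + y) * (x ^ (k + 1) + y ^ (k + 1)) - x * y * (x ^ k + y ^ k) := by ring
    rw [hrec, hsum, hprod, h₀, h₁]
    push_cast
    ring

theorem quadratic_pisot_unit_fractional_parts_general (a : ℤ)
    (b : ℤ) (hb : b = 1 ∨ b = -1) (hdisc : 0 < a ^ 2 - 4 * b)
    (α : ℝ) (hα : α = ((a : ℝ) + Real.sqrt ((a : ℝ) ^ 2 - 4 * (b : ℝ))) / 2) :
    ∀ n : ℕ, 0 < n → 2 ≤ α ^ n → distToNearestInt (α ^ n) = α ^ (-(n : ℤ)) := by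
  intro n _ hαn
  set β : ℝ := ((a : ℝ) - Real.sqrt ((a : ℝ) ^ 2 - 4 * (b : ℝ))) / 2
  have hsqrt := Real.sq_sqrt (show (0 : ℝ) ≤ (a : ℝ) ^ 2 - 4 * (b : ℝ) by exact_mod_cast hdisc.le)
  have hsum : α + β = a := by rw [hα]; ring
  have hprod : α * β = b := by rw [hα]; linear_combination -hsqrt / 4
  have hunit : |α ^ n * β ^ n| = 1 := by
    rcases hb with rfl | rfl <;> simp [← mul_pow, hprod]
  obtain ⟨m, hm⟩ := exists_intCast_eq_pow_add_pow hsum hprod n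
  rw [zpow_neg, zpow_natCast]
  exact distToNearestInt_eq_inv_of_add_eq_intCast hm hunit hαn

/-- If `a ≥ 1` is an integer, `b = ±1` with `a² - 4b > 0`, and
`α = (a + √(a² - 4b))/2 > 1` (a root of `X² - aX + b`), then `‖α^n‖ = α^(-n)`
for every positive integer `n` with `α^n ≥ 2`. -/
theorem quadratic_pisot_unit_fractional_parts (a : ℤ) (ha : 1 ≤ a)
    (b : ℤ) (hb : b = 1 ∨ b = -1) (hdisc : 0 < a ^ 2 - 4 * b)
    (α : ℝ) (hα : α = ((a : ℝ) + Real.sqrt ((a : ℝ) ^ 2 - 4 * (b : ℝ))) / 2)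
    (hα1 : 1 < α) :
    ∀ n : ℕ, 0 < n → 2 ≤ α ^ n → distToNearestInt (α ^ n) = α ^ (-(n : ℤ)) :=
  quadratic_pisot_unit_fractional_parts_general a b hb hdisc α hα
end

section
/- Let f(X) be an irreducible polynomial of degree d with integer coefficients, let m denote the number of roots of f(X) in ℂ of maximal modulus, and assume that one of these roots of maximal modulus is real and positive. Then m divides d and there is an irreducible polynomial g(X) with integer coefficients such that f(X) = g(X^m). -/
/-!
Let `a` be the preimage of `β` in the splitting field `L`, `G = Gal(L/ℚ)`, and `S` the set of
conjugates of `a` of maximal modulus, so `#S = m`. Complex conjugation restricts to some `τ ∈ G`,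
and `x * τ x = a ^ 2` for `x ∈ S`. Hence if `σ a ∈ S`, then for `x ∈ S` the moduli of `σ x` and
`σ (τ x)` are at most `|a|` with product `|a| ^ 2`, so `σ x ∈ S`: the stabilizer `H` of `S`
consists of the `σ` with `σ a ∈ S` and acts transitively on `S`. The product of `S` is fixed by
`τ ∈ H`, so it is real of modulus `|a| ^ m`, i.e. `± a ^ m`, and `H` fixes `a ^ m`. Counting
orbits, `deg a = m [G : H] ≥ m deg (a ^ m)`, while `a` is a root of `(minpoly (a ^ m))(X ^ m)`;
so `minpoly a = (minpoly (a ^ m))(X ^ m)`.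
-/

open Polynomial MulAction ComplexConjugate Pointwise

section Galois

variable {K L : Type*} [Field K] [Field L] [Algebra K L]

theorem mem_orbit_iff_mem_minpoly_rootSet [Normal K L] {x y : L} :
    y ∈ orbit Gal(L/K) x ↔ y ∈ (minpoly K x).rootSet L := by
  rw [← isConjRoot_iff_mem_minpoly_rootSet (Algebra.IsIntegral.isIntegral x), IsConjRoot.comm,
    isConjRoot_iff_exists_algEquiv]
  rfl

variable [IsGalois K L]

theorem natDegree_minpoly_eq_index_stabilizer (x : L) :
    (minpoly K x).natDegree = (stabilizer Gal(L/K) x).index := by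
  have horbit : orbit Gal(L/K) x = (minpoly K x).rootSet L :=
    Set.ext fun _ ↦ mem_orbit_iff_mem_minpoly_rootSet
  rw [index_stabilizer, horbit, Set.ncard_eq_toFinset_card', Set.toFinset_card,
    card_rootSet_eq_natDegree (IsGalois.separable K x) (IsGalois.splits K x)]

variable [FiniteDimensional K L]

theorem minpoly_eq_expand_minpoly_pow {a : L} {H : Subgroup Gal(L/K)} {m : ℕ} (hm : m ≠ 0)
    (hstab : stabilizer Gal(L/K) a ≤ H) (horbit : (orbit H a).ncard = m)
    (hfix : ∀ σ ∈ H, σ (a ^ m) = a ^ m) :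
    minpoly K a = expand K m (minpoly K (a ^ m)) := by
  have hdeg_a : (minpoly K a).natDegree = m * H.index := by
    rw [natDegree_minpoly_eq_index_stabilizer, ← Subgroup.relIndex_mul_index hstab, ← horbit,
      ← index_stabilizer]
    rfl
  have hdeg_pow : (minpoly K (a ^ m)).natDegree ≤ H.index := by
    rw [natDegree_minpoly_eq_index_stabilizer]
    exact Subgroup.index_antitone hfix
  have hdvd : minpoly K a ∣ expand K m (minpoly K (a ^ m)) :=
    minpoly.dvd K a (by rw [expand_aeval, minpoly.aeval])
  refine (eq_of_monic_of_dvd_of_natDegree_le (minpoly.monic (IsGalois.integral K a))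
    ((minpoly.monic (IsGalois.integral K _)).expand (Nat.pos_of_ne_zero hm)) hdvd ?_).symm
  rw [natDegree_expand, hdeg_a, mul_comm]
  exact Nat.mul_le_mul_left m hdeg_pow

end Galois

theorem Complex.eq_or_eq_neg_of_norm_eq {z w : ℂ} (hz : z.im = 0) (hw : w.im = 0)
    (h : ‖z‖ = ‖w‖) : z = w ∨ z = -w := by
  rw [← Complex.conj_eq_iff_im, Complex.conj_eq_iff_re] at hz hw
  rw [← hz, ← hw, Complex.norm_real, Complex.norm_real, Real.norm_eq_abs, Real.norm_eq_abs,
    abs_eq_abs] at h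
  rcases h with h | h
  · exact Or.inl (by rw [← hz, ← hw, h])
  · exact Or.inr (by rw [← hz, ← hw, h, Complex.ofReal_neg])

section SameNorm

variable {K L : Type*} [Field K] [Field L] [Algebra K L] {ι : L →+* ℂ} {a x : L}

theorem mul_eq_sq_of_norm_eq {τ : Gal(L/K)} (hτ : ∀ y, ι (τ y) = conj (ι y)) (ha : (ι a).im = 0)
    (hx : ‖ι x‖ = ‖ι a‖) : x * τ x = a ^ 2 := by
  apply ι.injective
  rw [map_mul, hτ, Complex.mul_conj', hx, ← Complex.mul_conj', Complex.conj_eq_iff_im.2 ha,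
    map_pow, sq]

variable [DecidableEq L]

variable (K) in
/-- When `‖ι a‖` is maximal among the conjugates, these are the conjugates of maximal modulus. -/
noncomputable def conjugatesOfSameNorm (ι : L →+* ℂ) (a : L) : Finset L :=
  ((minpoly K a).aroots L).toFinset.filter fun x ↦ ‖ι x‖ = ‖ι a‖

variable [Normal K L]

theorem mem_conjugatesOfSameNorm :
    x ∈ conjugatesOfSameNorm K ι a ↔ x ∈ orbit Gal(L/K) a ∧ ‖ι x‖ = ‖ι a‖ := by
  rw [conjugatesOfSameNorm, Finset.mem_filter, mem_orbit_iff_mem_minpoly_rootSet, rootSet_def,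
    Finset.mem_coe]

theorem self_mem_conjugatesOfSameNorm : a ∈ conjugatesOfSameNorm K ι a :=
  mem_conjugatesOfSameNorm.2 ⟨mem_orbit_self a, rfl⟩

theorem apply_mem_conjugatesOfSameNorm {τ : Gal(L/K)} (hτ : ∀ y, ι (τ y) = conj (ι y))
    (ha : (ι a).im = 0) (hmax : ∀ σ : Gal(L/K), ‖ι (σ a)‖ ≤ ‖ι a‖) {σ : Gal(L/K)}
    (hσ : σ a ∈ conjugatesOfSameNorm K ι a) (hx : x ∈ conjugatesOfSameNorm K ι a) :
    σ x ∈ conjugatesOfSameNorm K ι a := by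
  obtain ⟨⟨ρ, rfl⟩, hρ⟩ := mem_conjugatesOfSameNorm.1 hx
  refine mem_conjugatesOfSameNorm.2 ⟨⟨σ * ρ, rfl⟩, ?_⟩
  -- both factors of `σ (ρ a * τ (ρ a)) = σ a ^ 2` have norm at most `‖ι a‖`
  have hprod : ‖ι ((σ * ρ) a)‖ * ‖ι ((σ * τ * ρ) a)‖ = ‖ι a‖ ^ 2 := by
    rw [← norm_mul, ← map_mul, AlgEquiv.mul_apply, AlgEquiv.mul_apply, AlgEquiv.mul_apply,
      ← map_mul, mul_eq_sq_of_norm_eq (x := ρ a) hτ ha hρ, map_pow, map_pow,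
      norm_pow, (mem_conjugatesOfSameNorm.1 hσ).2]
  change ‖ι ((σ * ρ) a)‖ = ‖ι a‖
  nlinarith [hmax (σ * ρ), hmax (σ * τ * ρ), norm_nonneg (ι ((σ * ρ) a)),
    norm_nonneg (ι ((σ * τ * ρ) a))]

theorem smul_conjugatesOfSameNorm {τ : Gal(L/K)} (hτ : ∀ y, ι (τ y) = conj (ι y))
    (ha : (ι a).im = 0) (hmax : ∀ σ : Gal(L/K), ‖ι (σ a)‖ ≤ ‖ι a‖) {σ : Gal(L/K)}
    (hσ : σ a ∈ conjugatesOfSameNorm K ι a) :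
    σ • conjugatesOfSameNorm K ι a = conjugatesOfSameNorm K ι a := by
  refine Finset.eq_of_subset_of_card_le (fun y hy ↦ ?_) (Finset.card_smul_finset σ _).ge
  obtain ⟨x, hx, rfl⟩ := Finset.mem_smul_finset.1 hy
  exact apply_mem_conjugatesOfSameNorm hτ ha hmax hσ hx

theorem stabilizer_le_stabilizer_conjugatesOfSameNorm {τ : Gal(L/K)}
    (hτ : ∀ y, ι (τ y) = conj (ι y)) (ha : (ι a).im = 0)
    (hmax : ∀ σ : Gal(L/K), ‖ι (σ a)‖ ≤ ‖ι a‖) :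
    stabilizer Gal(L/K) a ≤ stabilizer Gal(L/K) (conjugatesOfSameNorm K ι a) := fun σ hσ ↦
  smul_conjugatesOfSameNorm hτ ha hmax
    (by rw [← AlgEquiv.smul_def, mem_stabilizer_iff.1 hσ]; exact self_mem_conjugatesOfSameNorm)

theorem orbit_stabilizer_conjugatesOfSameNorm {τ : Gal(L/K)}
    (hτ : ∀ y, ι (τ y) = conj (ι y)) (ha : (ι a).im = 0)
    (hmax : ∀ σ : Gal(L/K), ‖ι (σ a)‖ ≤ ‖ι a‖) :
    orbit (stabilizer Gal(L/K) (conjugatesOfSameNorm K ι a)) a = conjugatesOfSameNorm K ι a := by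
  ext x
  constructor
  · rintro ⟨⟨σ, hσ⟩, rfl⟩
    exact (mem_stabilizer_iff.1 hσ).le (Finset.smul_mem_smul_finset self_mem_conjugatesOfSameNorm)
  · intro hx
    obtain ⟨⟨σ, rfl⟩, -⟩ := mem_conjugatesOfSameNorm.1 hx
    exact ⟨⟨σ, smul_conjugatesOfSameNorm hτ ha hmax hx⟩, rfl⟩

theorem apply_pow_card_conjugatesOfSameNorm {τ : Gal(L/K)}
    (hτ : ∀ y, ι (τ y) = conj (ι y)) (ha : (ι a).im = 0)
    (hmax : ∀ σ : Gal(L/K), ‖ι (σ a)‖ ≤ ‖ι a‖) {σ : Gal(L/K)}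
    (hσ : σ ∈ stabilizer Gal(L/K) (conjugatesOfSameNorm K ι a)) :
    σ (a ^ (conjugatesOfSameNorm K ι a).card) = a ^ (conjugatesOfSameNorm K ι a).card := by
  set S := conjugatesOfSameNorm K ι a
  have hfix : ∀ σ ∈ stabilizer Gal(L/K) S, σ (∏ x ∈ S, x) = ∏ x ∈ S, x := by
    intro σ hσ
    conv_rhs => rw [← mem_stabilizer_iff.1 hσ]
    rw [map_prod, Finset.smul_finset_def, Finset.prod_image fun x _ y _ h ↦ smul_left_cancel σ h]
    rfl
  -- `τ` fixes `a`, so it stabilizes `S`; hence `ι (∏ S)` is real, and of norm `‖ι a‖ ^ #S`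
  have hτa : τ a = a := ι.injective (by rw [hτ, Complex.conj_eq_iff_im.2 ha])
  have hreal : (ι (∏ x ∈ S, x)).im = 0 := by
    rw [← Complex.conj_eq_iff_im, ← hτ,
      hfix τ (stabilizer_le_stabilizer_conjugatesOfSameNorm hτ ha hmax hτa)]
  have hreal_pow : (ι (a ^ S.card)).im = 0 := by
    rw [← Complex.conj_eq_iff_im, map_pow, map_pow, Complex.conj_eq_iff_im.2 ha]
  have hnorm : ‖ι (∏ x ∈ S, x)‖ = ‖ι (a ^ S.card)‖ := by
    rw [map_prod, norm_prod, Finset.prod_congr rfl fun x hx ↦ (mem_conjugatesOfSameNorm.1 hx).2,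
      Finset.prod_const, map_pow, norm_pow]
  rcases Complex.eq_or_eq_neg_of_norm_eq hreal hreal_pow hnorm with h | h
  · rw [← ι.injective h, hfix σ hσ]
  · have hP : ∏ x ∈ S, x = -a ^ S.card := ι.injective (by rw [h, map_neg])
    rw [← neg_eq_iff_eq_neg.2 hP, map_neg, hfix σ hσ]

theorem minpoly_eq_expand_card_conjugatesOfSameNorm [FiniteDimensional K L] [IsGalois K L]
    {τ : Gal(L/K)} (hτ : ∀ y, ι (τ y) = conj (ι y)) (ha : (ι a).im = 0)
    (hmax : ∀ σ : Gal(L/K), ‖ι (σ a)‖ ≤ ‖ι a‖) :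
    minpoly K a = expand K (conjugatesOfSameNorm K ι a).card
      (minpoly K (a ^ (conjugatesOfSameNorm K ι a).card)) :=
  minpoly_eq_expand_minpoly_pow (Finset.card_ne_zero.2 ⟨a, self_mem_conjugatesOfSameNorm⟩)
    (stabilizer_le_stabilizer_conjugatesOfSameNorm hτ ha hmax)
    (by rw [orbit_stabilizer_conjugatesOfSameNorm hτ ha hmax, Set.ncard_coe_finset])
    fun _ ↦ apply_pow_card_conjugatesOfSameNorm hτ ha hmax

end SameNorm

theorem AlgHom.exists_comp_algEquiv_eq {F E A : Type*} [Field F] [Field E] [Field A]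
    [Algebra F E] [Algebra F A] [Normal F E] (ι ψ : E →ₐ[F] A) :
    ∃ τ : Gal(E/F), ι.comp τ.toAlgHom = ψ := by
  let := ι.toRingHom.toAlgebra
  have : IsScalarTower F E A := IsScalarTower.of_algebraMap_eq fun x ↦ (ι.commutes x).symm
  exact ⟨Normal.algHomEquivAut F A E ψ, (Normal.algHomEquivAut F A E).symm_apply_apply ψ⟩

theorem Irreducible.exists_eq_expand_of_real_root_of_max_norm {q : ℚ[X]} (hq : Irreducible q)
    {β : ℂ} (hβ : β ∈ q.aroots ℂ) (hβreal : β.im = 0) (hβmax : ∀ γ ∈ q.aroots ℂ, ‖γ‖ ≤ ‖β‖) :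
    ∃ g : ℚ[X], q = expand ℚ ((q.aroots ℂ).filter (‖·‖ = ‖β‖)).card g := by
  classical
  have : Normal ℚ q.SplittingField := SplittingField.instNormal q
  have : IsGalois ℚ q.SplittingField := ⟨⟩
  set ι : q.SplittingField →ₐ[ℚ] ℂ := SplittingField.lift q (IsAlgClosed.splits _)
  have hroots : q.aroots ℂ = (q.aroots q.SplittingField).map ι := by
    have := (SplittingField.splits q).roots_map_of_injective (i := (ι : _ →+* ℂ)) ι.injective
    rwa [map_map, AlgHom.comp_algebraMap_of_tower] at this
  obtain ⟨a, ha, rfl⟩ := Multiset.mem_map.1 (hroots ▸ hβ)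
  have hlc : q.leadingCoeff ≠ 0 := leadingCoeff_ne_zero.2 hq.ne_zero
  have hmin : q = C q.leadingCoeff * minpoly ℚ a := by
    rw [← minpoly.eq_of_irreducible hq ((mem_aroots.1 ha).2), mul_comm, mul_assoc, ← C_mul,
      inv_mul_cancel₀ hlc, C_1, mul_one]
  have haroots : q.aroots q.SplittingField = (minpoly ℚ a).aroots q.SplittingField := by
    rw [← aroots_C_mul (minpoly ℚ a) hlc, ← hmin]
  obtain ⟨τ, hτ⟩ := ι.exists_comp_algEquiv_eq ((starRingEnd ℂ).comp ι.toRingHom).toRatAlgHom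
  have hmax : ∀ σ : Gal(q.SplittingField/ℚ), ‖ι (σ a)‖ ≤ ‖ι a‖ := by
    intro σ
    refine hβmax _ (hroots ▸ Multiset.mem_map_of_mem ι (haroots ▸ ?_))
    have := mem_orbit_iff_mem_minpoly_rootSet.1 (mem_orbit a σ)
    rwa [rootSet_def, Finset.mem_coe, Multiset.mem_toFinset] at this
  have hcard : ((q.aroots ℂ).filter (‖·‖ = ‖ι a‖)).card
      = (conjugatesOfSameNorm ℚ (ι : _ →+* ℂ) a).card := by
    rw [hroots, Multiset.filter_map, Multiset.card_map, haroots, conjugatesOfSameNorm,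
      ← Multiset.toFinset_filter, Multiset.toFinset_card_of_nodup
        ((nodup_roots (Separable.map (IsGalois.separable ℚ a))).filter _)]
    rfl
  rw [hcard]
  refine ⟨C q.leadingCoeff * minpoly ℚ (a ^ (conjugatesOfSameNorm ℚ (ι : _ →+* ℂ) a).card), ?_⟩
  rw [map_mul, expand_C, ← minpoly_eq_expand_card_conjugatesOfSameNorm (ι := (ι : _ →+* ℂ))
    (τ := τ) (fun y ↦ AlgHom.congr_fun hτ y) hβreal hmax, ← hmin]

theorem Polynomial.exists_map_eq_and_eq_expand {R S : Type*} [CommSemiring R] [CommSemiring S]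
    {φ : R →+* S} (hφ : Function.Injective φ) {f : R[X]} {m : ℕ} (hm : m ≠ 0) {g : S[X]}
    (h : f.map φ = expand S m g) : ∃ g₀ : R[X], g₀.map φ = g ∧ f = expand R m g₀ :=
  ⟨contract m f, by rw [map_contract hm, h, contract_expand m hm],
    map_injective φ hφ (by rw [map_expand, map_contract hm, h, contract_expand m hm])⟩

theorem boyd_roots_of_maximal_modulus_general (f : Polynomial ℤ)
    (hf : Irreducible (f.map (Int.castRingHom ℚ)))
    (β : ℂ) (hβroot : β ∈ (f.map (Int.castRingHom ℂ)).roots)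
    (hβreal : β.im = 0)
    (hβmax : ∀ γ ∈ (f.map (Int.castRingHom ℂ)).roots, ‖γ‖ ≤ ‖β‖)
    (m : ℕ)
    (hm : m = Multiset.card ((f.map (Int.castRingHom ℂ)).roots.filter
      (fun z => ‖z‖ = ‖β‖))) :
    m ∣ f.natDegree ∧ ∃ g : Polynomial ℤ,
      Irreducible (g.map (Int.castRingHom ℚ)) ∧ f = g.comp (Polynomial.X ^ m) := by
  have hroots : (f.map (Int.castRingHom ℂ)).roots = (f.map (Int.castRingHom ℚ)).aroots ℂ := by
    rw [aroots, map_map, Subsingleton.elim ((algebraMap ℚ ℂ).comp _) (Int.castRingHom ℂ)]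
  rw [hroots] at hβroot hβmax hm
  have hm0 : m ≠ 0 := by
    rw [hm, Ne, Multiset.card_eq_zero]
    exact fun h ↦ Multiset.notMem_zero β (h ▸ Multiset.mem_filter.2 ⟨hβroot, rfl⟩)
  obtain ⟨g, hg⟩ := hf.exists_eq_expand_of_real_root_of_max_norm hβroot hβreal hβmax
  rw [← hm] at hg
  obtain ⟨g, rfl, rfl⟩ := exists_map_eq_and_eq_expand (RingHom.injective_int _) hm0 hg
  refine ⟨natDegree_expand m g ▸ dvd_mul_left m g.natDegree, g,
    of_irreducible_expand hm0 (by rwa [← map_expand]), expand_eq_comp_X_pow m⟩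

/-- Boyd's lemma: let `f` be an irreducible polynomial with integer coefficients
(irreducible over `ℚ`), let `m` be the number of roots of `f` in `ℂ` of maximal
modulus (counted with multiplicity), and assume one of these roots is real and
positive. Then `m` divides the degree of `f` and there is an irreducible polynomial
`g` with integer coefficients such that `f(X) = g(X^m)`. -/
theorem boyd_roots_of_maximal_modulus (f : Polynomial ℤ)
    (hf : Irreducible (f.map (Int.castRingHom ℚ)))
    (β : ℂ) (hβroot : β ∈ (f.map (Int.castRingHom ℂ)).roots)
    (hβreal : β.im = 0) (hβpos : 0 < β.re)
    (hβmax : ∀ γ ∈ (f.map (Int.castRingHom ℂ)).roots, ‖γ‖ ≤ ‖β‖)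
    (m : ℕ)
    (hm : m = Multiset.card ((f.map (Int.castRingHom ℂ)).roots.filter
      (fun z => ‖z‖ = ‖β‖))) :
    m ∣ f.natDegree ∧ ∃ g : Polynomial ℤ,
      Irreducible (g.map (Int.castRingHom ℚ)) ∧ f = g.comp (Polynomial.X ^ m) :=
  boyd_roots_of_maximal_modulus_general f hf β hβroot hβreal hβmax m hm
end

section
/- For Lebesgue-almost every real number ξ > 1, one has limsup_{n → ∞} (−log ‖ξ^n‖)/n = 0. -/
open Filter

/-!
Borel–Cantelli. For `1 ≤ a`, the map `ξ ↦ ξ ^ (n + 1)` expands distances on `[a, b]` by at least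
`a ^ n`, so the `ξ ∈ [a, b]` with `‖ξ ^ (n + 1)‖ < δ` lie in at most `b ^ (n + 1) + 2` sets of
diameter `2δ / a ^ n`. For `δ = e ^ (-ε (n + 1))` and `b < a e ^ ε` these measures are summable,
so almost every `ξ ∈ [a, b]` eventually has `‖ξ ^ n‖ ≥ e ^ (-ε n)`. Countably many such blocks
cover `(1, ∞)` and countably many `ε` suffice. The lower bound is free: `‖x‖ ≤ 1 / 2` makes
`-log ‖ξ ^ n‖ / n` nonnegative, also when `‖ξ ^ n‖ = 0` since `log 0 = 0`.
-/

open MeasureTheory Set Real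

lemma distToNearestInt_nonneg (x : ℝ) : 0 ≤ distToNearestInt x := abs_nonneg _

lemma distToNearestInt_le_half (x : ℝ) : distToNearestInt x ≤ 1 / 2 := abs_sub_round x

lemma mul_abs_sub_le_abs_pow_succ_sub_pow_succ {a x y : ℝ} (ha : 0 ≤ a) (hx : a ≤ x) (hy : a ≤ y)
    (n : ℕ) : a ^ n * |x - y| ≤ |x ^ (n + 1) - y ^ (n + 1)| := by
  have hterm : ∀ i ∈ Finset.range (n + 1), 0 ≤ x ^ i * y ^ (n + 1 - 1 - i) := fun i _ => by
    have := ha.trans hx; have := ha.trans hy; positivity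
  have hsum : a ^ n ≤ ∑ i ∈ Finset.range (n + 1), x ^ i * y ^ (n + 1 - 1 - i) :=
    calc a ^ n ≤ x ^ n * y ^ (n + 1 - 1 - n) := by simpa using pow_le_pow_left₀ ha hx n
      _ ≤ _ := Finset.single_le_sum hterm (Finset.self_mem_range_succ n)
  rw [← geom_sum₂_mul, abs_mul, abs_of_nonneg (Finset.sum_nonneg hterm)]
  exact mul_le_mul_of_nonneg_right hsum (abs_nonneg _)

section Expanding

variable {f : ℝ → ℝ} {s : Set ℝ} {c : ℝ}

lemma volume_setOf_abs_sub_lt_le (hc : 0 < c) (hf : ∀ x ∈ s, ∀ y ∈ s, c * |x - y| ≤ |f x - f y|)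
    (m δ : ℝ) : volume {x ∈ s | |f x - m| < δ} ≤ ENNReal.ofReal (2 * δ / c) := by
  refine (Real.volume_le_diam _).trans (Metric.ediam_le fun x hx y hy => ?_)
  have hfxy : |f x - f y| < 2 * δ := by
    calc |f x - f y| ≤ |f x - m| + |m - f y| := abs_sub_le _ _ _
      _ < 2 * δ := by rw [abs_sub_comm m]; linarith [hx.2, hy.2]
  have hδ : 0 < δ := (abs_nonneg _).trans_lt hx.2
  rw [edist_le_ofReal (by positivity), Real.dist_eq, le_div_iff₀ hc, mul_comm]
  exact (hf x hx.1 y hy.1).trans hfxy.le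

lemma volume_setOf_distToNearestInt_lt_le {B : ℝ} (hc : 0 < c)
    (hf : ∀ x ∈ s, ∀ y ∈ s, c * |x - y| ≤ |f x - f y|) (hfs : MapsTo f s (Icc 0 B)) (δ : ℝ) :
    volume {x ∈ s | distToNearestInt (f x) < δ} ≤ ENNReal.ofReal ((B + 2) * (2 * δ / c)) := by
  rcases s.eq_empty_or_nonempty with rfl | ⟨x₀, hx₀⟩
  · simp
  have hB : 0 ≤ B := (hfs hx₀).1.trans (hfs hx₀).2
  set N := ⌊B⌋₊ + 2
  have hcover : {x ∈ s | distToNearestInt (f x) < δ} ⊆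
      ⋃ m ∈ Finset.range N, {x ∈ s | |f x - m| < δ} := by
    rintro x ⟨hx, hd⟩
    have hround := abs_le.1 (abs_sub_round (f x))
    have hm0 : 0 ≤ round (f x) := by
      have : (-1 : ℝ) < round (f x) := by linarith [(hfs hx).1]
      have : (-1 : ℤ) < round (f x) := by exact_mod_cast this
      omega
    have hmN : round (f x) < N := by
      have : (round (f x) : ℝ) < N := by
        push_cast [N]; linarith [(hfs hx).2, Nat.lt_floor_add_one B]
      exact_mod_cast this
    refine mem_biUnion (x := (round (f x)).toNat) (Finset.mem_range.2 (by omega)) ⟨hx, ?_⟩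
    have hcast : (((round (f x)).toNat : ℕ) : ℝ) = round (f x) := by
      exact_mod_cast Int.toNat_of_nonneg hm0
    rwa [hcast]
  calc volume {x ∈ s | distToNearestInt (f x) < δ}
      ≤ ∑ m ∈ Finset.range N, volume {x ∈ s | |f x - m| < δ} :=
        (measure_mono hcover).trans (measure_biUnion_finset_le _ _)
    _ ≤ ∑ _m ∈ Finset.range N, ENNReal.ofReal (2 * δ / c) :=
        Finset.sum_le_sum fun m _ => volume_setOf_abs_sub_lt_le hc hf m δ
    _ = ENNReal.ofReal N * ENNReal.ofReal (2 * δ / c) := by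
        rw [Finset.sum_const, Finset.card_range, nsmul_eq_mul, ENNReal.ofReal_natCast]
    _ ≤ ENNReal.ofReal (B + 2) * ENNReal.ofReal (2 * δ / c) := by
        gcongr
        push_cast [N]
        linarith [Nat.floor_le hB]
    _ = ENNReal.ofReal ((B + 2) * (2 * δ / c)) := (ENNReal.ofReal_mul (by linarith)).symm

end Expanding

lemma ae_mem_Icc_eventually_exp_neg_mul_le_distToNearestInt_pow {a b ε : ℝ} (ha : 1 ≤ a) (hab : a ≤ b)
    (hb : b < a * exp ε) :
    ∀ᵐ ξ, ξ ∈ Icc a b → ∀ᶠ n : ℕ in atTop, exp (-(ε * n)) ≤ distToNearestInt (ξ ^ n) := by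
  set E : ℕ → Set ℝ := fun n => {ξ ∈ Icc a b | distToNearestInt (ξ ^ n) < exp (-(ε * n))}
  set r := exp (-ε)
  have ha0 : 0 < a := one_pos.trans_le ha
  have hε : 0 < ε := one_lt_exp_iff.1 (by nlinarith)
  have hr0 : 0 < r := exp_pos _
  have hr1 : r < 1 := exp_lt_one_iff.2 (neg_lt_zero.2 hε)
  have hb0 : 0 < b := ha0.trans_le hab
  have hbr : b * r < a := by
    calc b * r < a * exp ε * r := by gcongr
      _ = a := by rw [mul_assoc, ← exp_add, add_neg_cancel, exp_zero, mul_one]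
  set g : ℕ → ℝ := fun n => 2 * r * (b * (b * r / a) ^ n + 2 * (r / a) ^ n)
  have hg : Summable g :=
    (((summable_geometric_of_lt_one (by positivity) ((div_lt_one ha0).2 hbr)).mul_left b).add
      ((summable_geometric_of_lt_one (by positivity) ((div_lt_one ha0).2 (hr1.trans_le ha))).mul_left
        2)).mul_left _
  have hE : ∀ n, volume (E (n + 1)) ≤ ENNReal.ofReal (g n) := by
    intro n
    have hexp : ∀ x ∈ Icc a b, ∀ y ∈ Icc a b, a ^ n * |x - y| ≤ |x ^ (n + 1) - y ^ (n + 1)| :=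
      fun x hx y hy => mul_abs_sub_le_abs_pow_succ_sub_pow_succ ha0.le hx.1 hy.1 n
    have hmaps : MapsTo (· ^ (n + 1)) (Icc a b) (Icc 0 (b ^ (n + 1))) := fun x hx => by
      have hx0 : 0 ≤ x := ha0.le.trans hx.1
      exact ⟨by positivity, pow_le_pow_left₀ hx0 hx.2 _⟩
    refine (volume_setOf_distToNearestInt_lt_le (pow_pos ha0 n) hexp hmaps _).trans_eq
      (congrArg _ ?_)
    rw [show exp (-(ε * ((n + 1 : ℕ) : ℝ))) = r ^ (n + 1) by rw [← exp_nat_mul]; push_cast; ring_nf]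
    simp only [g, div_pow]
    field_simp
    ring
  have hsum : ∑' n, volume (E n) ≠ ⊤ := by
    rw [tsum_eq_zero_add' ENNReal.summable]
    refine ENNReal.add_ne_top.2 ⟨?_, ?_⟩
    · exact ((measure_mono fun ξ hξ => hξ.1).trans_lt measure_Icc_lt_top).ne
    · refine ne_top_of_le_ne_top ?_ (ENNReal.tsum_le_tsum hE)
      rw [← ENNReal.ofReal_tsum_of_nonneg (fun n => by positivity) hg]
      exact ENNReal.ofReal_ne_top
  filter_upwards [ae_eventually_notMem hsum] with ξ hξ hmem
  filter_upwards [hξ] with n hn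
  exact not_lt.1 fun h => hn ⟨hmem, h⟩

lemma ae_eventually_exp_neg_mul_le_distToNearestInt_pow {ε : ℝ} (hε : 0 < ε) :
    ∀ᵐ ξ, 1 < ξ → ∀ᶠ n : ℕ in atTop, exp (-(ε * n)) ≤ distToNearestInt (ξ ^ n) := by
  set q := exp (ε / 2)
  have hq : 1 < q := one_lt_exp_iff.2 (half_pos hε)
  have hblock : ∀ j : ℕ, ∀ᵐ ξ, ξ ∈ Icc (q ^ j) (q ^ (j + 1)) →
      ∀ᶠ n : ℕ in atTop, exp (-(ε * n)) ≤ distToNearestInt (ξ ^ n) := fun j =>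
    ae_mem_Icc_eventually_exp_neg_mul_le_distToNearestInt_pow (one_le_pow₀ hq.le)
      (pow_le_pow_right₀ hq.le j.le_succ)
      (by rw [pow_succ]; gcongr; exact exp_lt_exp.2 (half_lt_self hε))
  filter_upwards [ae_all_iff.2 hblock] with ξ hξ h1
  obtain ⟨j, hj, hj'⟩ := exists_nat_pow_near h1.le hq
  exact hξ j ⟨hj, hj'.le⟩

lemma tendsto_neg_log_div_atTop_zero {u : ℕ → ℝ} (h0 : ∀ n, 0 ≤ u n) (h1 : ∀ n, u n ≤ 1)
    (h : ∀ ε > 0, ∀ᶠ n : ℕ in atTop, exp (-(ε * n)) ≤ u n) :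
    Tendsto (fun n : ℕ => -log (u n) / n) atTop (nhds 0) := by
  have hnonneg : ∀ n : ℕ, 0 ≤ -log (u n) / n := fun n =>
    div_nonneg (neg_nonneg.2 (log_nonpos (h0 n) (h1 n))) n.cast_nonneg
  refine tendsto_order.2 ⟨fun c hc => Eventually.of_forall fun n => hc.trans_le (hnonneg n),
    fun c hc => ?_⟩
  filter_upwards [h (c / 2) (half_pos hc), eventually_gt_atTop 0] with n hn hn0
  have hlog : -(c / 2 * n) ≤ log (u n) := (le_log_iff_exp_le ((exp_pos _).trans_le hn)).2 hn
  have hn0' : (0 : ℝ) < n := Nat.cast_pos.2 hn0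
  rw [div_lt_iff₀ hn0']
  linarith [mul_lt_mul_of_pos_right (half_lt_self hc) hn0']

/-- Mahler–Szekeres: for Lebesgue-almost every real `ξ > 1`,
`limsup_{n → ∞} (-log ‖ξ^n‖)/n = 0`. -/
theorem ae_limsup_neg_log_dist_eq_zero :
    ∀ᵐ ξ ∂(MeasureTheory.volume : MeasureTheory.Measure ℝ), 1 < ξ →
      Filter.limsup (fun n : ℕ => -Real.log (distToNearestInt (ξ ^ n)) / n) atTop = 0 := by
  have h := ae_all_iff.2 fun k : ℕ =>
    ae_eventually_exp_neg_mul_le_distToNearestInt_pow (ε := 1 / (k + 1)) (by positivity)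
  filter_upwards [h] with ξ hξ h1
  refine (tendsto_neg_log_div_atTop_zero (fun n => distToNearestInt_nonneg _)
    (fun n => (distToNearestInt_le_half _).trans (by norm_num)) fun ε hε => ?_).limsup_eq
  obtain ⟨k, hk⟩ := exists_nat_one_div_lt hε
  filter_upwards [hξ k h1] with n hn
  exact (exp_le_exp.2 (neg_le_neg (by gcongr))).trans hn
end

section
/- The set of real numbers ξ > 1 such that limsup_{n → ∞} (−log ‖ξ^n‖)/n = +∞ has Hausdorff dimension zero. -/
open Filter

/-!
If `ξ ∈ [1, b]` has `ν(ξ) = ∞`, then for every `M` it lies in infinitely many of the sets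
`{ξ ∈ [1, b] : |ξ ^ k - m| ≤ e^(-M k)}`, of which only `m ≤ b ^ k + 1` are nonempty. Since
`ξ ↦ ξ ^ k` expands distances on `[1, ∞)`, each has diameter at most `2 e^(-M k)`; for
`M = log (2 b) / d` the `d`-th powers of these diameters are summable, and the
Hausdorff–Cantelli lemma gives `μH[d] = 0` for every `d > 0`.
-/

open Set MeasureTheory Topology Metric
open scoped ENNReal NNReal

theorem hausdorffMeasure_setOf_frequently_mem_eq_zero {X ι : Type*} [EMetricSpace X]
    [MeasurableSpace X] [BorelSpace X] [Countable ι] {d : ℝ} {s : ℕ → ι → Set X}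
    {r : ℕ → ℝ≥0∞} (hr : Antitone r) (hr₀ : Tendsto r atTop (𝓝 0))
    (hs : ∀ k i, ediam (s k i) ≤ r k) (hsum : ∑' k, ∑' i, ediam (s k i) ^ d ≠ ∞) :
    μH[d] {x | ∃ᶠ k in atTop, x ∈ ⋃ i, s k i} = 0 := by
  refine le_zero_iff.1 <| (Measure.hausdorffMeasure_le_liminf_tsum d _ r hr₀
    (fun N (p : ℕ × ι) => s (p.1 + N) p.2) ?_ ?_).trans ?_
  · exact .of_forall fun N p => (hs _ _).trans (hr (Nat.le_add_left _ _))
  · refine .of_forall fun N x hx => ?_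
    obtain ⟨k, hk, hxk⟩ := frequently_atTop.1 hx N
    obtain ⟨i, hi⟩ := mem_iUnion.1 hxk
    exact mem_iUnion.2 ⟨(k - N, i), by simpa [Nat.sub_add_cancel hk]⟩
  · simp only [fun N => ENNReal.tsum_prod (f := fun k i => ediam (s (k + N) i) ^ d)]
    exact (ENNReal.tendsto_sum_nat_add _ hsum).liminf_eq.le

theorem dimH_eq_zero_of_forall_hausdorffMeasure_eq_zero {X : Type*} [EMetricSpace X]
    [MeasurableSpace X] [BorelSpace X] {s : Set X} (h : ∀ d : ℝ≥0, 0 < d → μH[d] s = 0) :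
    dimH s = 0 :=
  nonpos_iff_eq_zero.1 <| ENNReal.le_of_forall_pos_le_add fun d hd _ => by
    simpa using dimH_le_of_hausdorffMeasure_ne_top ((h d hd).trans_ne ENNReal.zero_ne_top)

theorem sub_le_pow_sub_pow_of_one_le {x y : ℝ} (hx : 1 ≤ x) (hxy : x ≤ y) {k : ℕ}
    (hk : k ≠ 0) : y - x ≤ y ^ k - x ^ k := by
  obtain ⟨j, rfl⟩ := Nat.exists_eq_succ_of_ne_zero hk
  induction j with
  | zero => simp
  | succ j ih =>
    have hxj : 1 ≤ x ^ (j + 1) := one_le_pow₀ hx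
    have hmono : x ^ (j + 1) ≤ y ^ (j + 1) := pow_le_pow_left₀ (by linarith) hxy _
    calc y - x ≤ y ^ (j + 1) - x ^ (j + 1) := ih j.succ_ne_zero
      _ ≤ y * (y ^ (j + 1) - x ^ (j + 1)) + x ^ (j + 1) * (y - x) := by nlinarith
      _ = y ^ (j + 2) - x ^ (j + 2) := by ring

theorem abs_sub_le_abs_pow_sub_pow {x y : ℝ} (hx : 1 ≤ x) (hy : 1 ≤ y) {k : ℕ} (hk : k ≠ 0) :
    |x - y| ≤ |x ^ k - y ^ k| := by
  rcases le_total x y with hxy | hyx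
  · rw [abs_sub_comm, abs_sub_comm (x ^ k), abs_of_nonneg (sub_nonneg.2 hxy)]
    exact (sub_le_pow_sub_pow_of_one_le hx hxy hk).trans (le_abs_self _)
  · rw [abs_of_nonneg (sub_nonneg.2 hyx)]
    exact (sub_le_pow_sub_pow_of_one_le hy hyx hk).trans (le_abs_self _)

theorem ENNReal.tsum_le_mul_of_eq_zero_of_ge {f : ℕ → ℝ≥0∞} {K : ℕ} {c : ℝ≥0∞}
    (hf₀ : ∀ m, K ≤ m → f m = 0) (hfc : ∀ m, f m ≤ c) : ∑' m, f m ≤ K * c := by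
  rw [tsum_eq_sum (s := Finset.range K) fun m hm => hf₀ m (by simpa using hm)]
  calc ∑ m ∈ Finset.range K, f m ≤ ∑ _m ∈ Finset.range K, c := Finset.sum_le_sum fun m _ => hfc m
    _ = K * c := by simp

def powApproxSet (b ε : ℝ) (k m : ℕ) : Set ℝ := {ξ | ξ ∈ Icc 1 b ∧ |ξ ^ k - m| ≤ ε}

section powApproxSet

variable {b ε : ℝ} {k m : ℕ}

theorem ediam_powApproxSet_le (hk : k ≠ 0) :
    ediam (powApproxSet b ε k m) ≤ ENNReal.ofReal (2 * ε) := by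
  refine ediam_le fun x ⟨⟨hx, _⟩, hxm⟩ y ⟨⟨hy, _⟩, hym⟩ => ?_
  rw [edist_dist, Real.dist_eq]
  refine ENNReal.ofReal_le_ofReal ?_
  calc |x - y| ≤ |x ^ k - y ^ k| := abs_sub_le_abs_pow_sub_pow hx hy hk
    _ ≤ |x ^ k - m| + |(m : ℝ) - y ^ k| := abs_sub_le _ _ _
    _ ≤ 2 * ε := by rw [abs_sub_comm (m : ℝ)]; linarith

theorem powApproxSet_eq_empty (hε : ε ≤ 1) (hm : ⌊b ^ k⌋₊ + 2 ≤ m) :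
    powApproxSet b ε k m = ∅ := by
  refine eq_empty_of_forall_notMem fun ξ ⟨⟨hξ, hξb⟩, hξm⟩ => ?_
  have hpow : ξ ^ k ≤ b ^ k := pow_le_pow_left₀ (by linarith) hξb k
  have hfloor : b ^ k < ⌊b ^ k⌋₊ + 1 := Nat.lt_floor_add_one _
  have hm' : (⌊b ^ k⌋₊ : ℝ) + 2 ≤ m := by exact_mod_cast hm
  linarith [le_abs_self ((m : ℝ) - ξ ^ k), abs_sub_comm (m : ℝ) (ξ ^ k)]

theorem exists_mem_powApproxSet {ξ : ℝ} (hξ : ξ ∈ Icc 1 b)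
    (hε : distToNearestInt (ξ ^ k) ≤ ε) : ∃ m : ℕ, ξ ∈ powApproxSet b ε k m := by
  have hround : 0 ≤ round (ξ ^ k) := by
    rw [round_eq, Int.floor_nonneg]
    have : (0 : ℝ) ≤ ξ ^ k := pow_nonneg (by linarith [hξ.1]) k
    linarith
  obtain ⟨m, hm⟩ := Int.eq_ofNat_of_zero_le hround
  refine ⟨m, hξ, ?_⟩
  rwa [distToNearestInt, hm, Int.cast_natCast] at hε

theorem tsum_ediam_powApproxSet_rpow_le {d : ℝ} (hd : 0 < d) (hk : k ≠ 0) (hε : ε ≤ 1) :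
    ∑' m, ediam (powApproxSet b ε k m) ^ d ≤
      ((⌊b ^ k⌋₊ + 2 : ℕ) : ℝ≥0∞) * ENNReal.ofReal (2 * ε) ^ d := by
  refine ENNReal.tsum_le_mul_of_eq_zero_of_ge (fun m hm => ?_) fun m => ?_
  · rw [powApproxSet_eq_empty hε hm, ediam_empty, ENNReal.zero_rpow_of_pos hd]
  · exact ENNReal.rpow_le_rpow (ediam_powApproxSet_le hk) hd.le

theorem floor_pow_add_two_mul_rpow_le {d M : ℝ} (hb : 1 ≤ b)
    (hM : b * Real.exp (-(M * d)) ≤ 2⁻¹) (k : ℕ) :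
    ((⌊b ^ k⌋₊ + 2 : ℕ) : ℝ) * (2 * Real.exp (-(M * k))) ^ d ≤ 3 * 2 ^ d * 2⁻¹ ^ k := by
  have hcard : ((⌊b ^ k⌋₊ + 2 : ℕ) : ℝ) ≤ 3 * b ^ k := by
    have := Nat.floor_le (pow_nonneg (zero_le_one.trans hb) k)
    have := one_le_pow₀ (n := k) hb
    push_cast
    linarith
  have hrpow : (2 * Real.exp (-(M * k))) ^ d = 2 ^ d * Real.exp (-(M * d)) ^ k := by
    rw [Real.mul_rpow zero_le_two (Real.exp_nonneg _), ← Real.exp_mul, ← Real.exp_nat_mul]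
    ring_nf
  calc ((⌊b ^ k⌋₊ + 2 : ℕ) : ℝ) * (2 * Real.exp (-(M * k))) ^ d
      ≤ 3 * b ^ k * (2 ^ d * Real.exp (-(M * d)) ^ k) := by rw [hrpow]; gcongr
    _ = 3 * 2 ^ d * (b * Real.exp (-(M * d))) ^ k := by ring
    _ ≤ 3 * 2 ^ d * 2⁻¹ ^ k := by gcongr

theorem tsum_ediam_powApproxSet_rpow_le_geometric {d M : ℝ} (hb : 1 ≤ b) (hd : 0 < d)
    (hM₀ : 0 ≤ M) (hM : b * Real.exp (-(M * d)) ≤ 2⁻¹) (hk : k ≠ 0) :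
    ∑' m, ediam (powApproxSet b (Real.exp (-(M * k))) k m) ^ d ≤
      ENNReal.ofReal (3 * 2 ^ d * 2⁻¹ ^ k) := by
  have hε : Real.exp (-(M * k)) ≤ 1 := Real.exp_le_one_iff.2 (by simp only [neg_nonpos]; positivity)
  refine (tsum_ediam_powApproxSet_rpow_le hd hk hε).trans ?_
  rw [ENNReal.ofReal_rpow_of_nonneg (by positivity) hd.le, ← ENNReal.ofReal_natCast,
    ← ENNReal.ofReal_mul (Nat.cast_nonneg _)]
  exact ENNReal.ofReal_le_ofReal (floor_pow_add_two_mul_rpow_le hb hM k)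

end powApproxSet

theorem hausdorffMeasure_setOf_forall_frequently_eq_zero {b : ℝ} (hb : 1 ≤ b) {d : ℝ} (hd : 0 < d) :
    μH[d] {ξ ∈ Icc 1 b | ∀ M : ℝ, ∃ᶠ n : ℕ in atTop,
      distToNearestInt (ξ ^ n) < Real.exp (-(M * n))} = 0 := by
  set M := Real.log (2 * b) / d
  have hM₀ : 0 < M := div_pos (Real.log_pos (by linarith)) hd
  have hM : b * Real.exp (-(M * d)) ≤ 2⁻¹ := by
    rw [div_mul_cancel₀ _ hd.ne', Real.exp_neg, Real.exp_log (by linarith)]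
    exact le_of_eq (by field_simp)
  -- exponents are shifted by one, since `ξ ↦ ξ ^ 0` does not expand distances
  set ε : ℕ → ℝ := fun k => Real.exp (-(M * (k + 1 : ℕ)))
  have hε : Tendsto ε atTop (𝓝 0) :=
    Real.tendsto_exp_atBot.comp <| tendsto_neg_atTop_atBot.comp <|
      ((tendsto_natCast_atTop_atTop.comp (tendsto_add_atTop_nat 1)).const_mul_atTop hM₀)
  refine measure_mono_null (fun ξ ⟨hξ, hfreq⟩ => ?_)
    (hausdorffMeasure_setOf_frequently_mem_eq_zero (d := d)
      (s := fun k m => powApproxSet b (ε k) (k + 1) m) (r := fun k => ENNReal.ofReal (2 * ε k))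
      (fun i j hij => ?_) ?_ (fun k m => ediam_powApproxSet_le k.succ_ne_zero) ?_)
  · have := hfreq M
    rw [← map_add_atTop_eq_nat 1, frequently_map] at this
    exact this.mono fun k hk => mem_iUnion.2 (exists_mem_powApproxSet hξ hk.le)
  · simp only [ε]
    gcongr
  · simpa using (ENNReal.tendsto_ofReal (hε.const_mul 2))
  · refine ne_top_of_le_ne_top ?_ <| ENNReal.tsum_le_tsum fun k =>
      tsum_ediam_powApproxSet_rpow_le_geometric hb hd hM₀.le hM k.succ_ne_zero
    rw [← ENNReal.ofReal_tsum_of_nonneg (fun k => by positivity)]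
    · exact ENNReal.ofReal_ne_top
    · exact (summable_nat_add_iff 1).2 <|
        (summable_geometric_of_lt_one (by norm_num) (by norm_num)).mul_left _

/-- The set of real numbers `ξ > 1` with `ν(ξ) = limsup (-log ‖ξ^n‖)/n = +∞`
(with the convention `-log 0 = +∞`, so `ν(ξ) = +∞` is expressed as: for every `M`,
`‖ξ^n‖ < e^(-Mn)` for infinitely many `n`) has Hausdorff dimension zero. -/
theorem dimH_infinite_nu_eq_zero :
    dimH {ξ : ℝ | 1 < ξ ∧ ∀ M : ℝ, ∃ᶠ n : ℕ in atTop,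
      distToNearestInt (ξ ^ n) < Real.exp (-(M * n))} = 0 := by
  have hcover : {ξ : ℝ | 1 < ξ ∧ ∀ M : ℝ, ∃ᶠ n : ℕ in atTop,
      distToNearestInt (ξ ^ n) < Real.exp (-(M * n))} ⊆
      ⋃ b : ℕ, {ξ ∈ Icc 1 (b + 1 : ℝ) | ∀ M : ℝ, ∃ᶠ n : ℕ in atTop,
        distToNearestInt (ξ ^ n) < Real.exp (-(M * n))} := fun ξ ⟨hξ, hfreq⟩ =>
    mem_iUnion.2 ⟨⌈ξ⌉₊, ⟨hξ.le, (Nat.le_ceil ξ).trans (by linarith)⟩, hfreq⟩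
  refine nonpos_iff_eq_zero.1 <| (dimH_mono hcover).trans ?_
  rw [dimH_iUnion]
  exact iSup_le fun b => (dimH_eq_zero_of_forall_hausdorffMeasure_eq_zero fun d hd =>
    hausdorffMeasure_setOf_forall_frequently_eq_zero (le_add_of_nonneg_left b.cast_nonneg) hd).le
end
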